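/- Let u_n and v_n be the normalized Maclaurin coefficients of e^{ipz}·J_ν(z) and of e^{−ipz}·J_ν(z) respectively (i denotes the imaginary unit). Then the n-th normalized Maclaurin coefficient of sin(pz)·J_ν(z) equals (u_n − v_n)/(2i) for every n ≥ 0; moreover u_0 = 1, u_1 = ip, v_0 = 1, v_1 = −ip, and for every n ≥ 1: u_{n+1} = (ip(2ν+2n+1)/((n+1)(2ν+n+1)))·u_n + ((p²−1)/((n+1)(2ν+n+1)))·u_{n−1} and v_{n+1} = −(ip(2ν+2n+1)/((n+1)(2ν+n+1)))·v_n + ((p²−1)/((n+1)(2ν+n+1)))·v_{n−1}. -/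

import Mathlib

/-!
With `J_ν(z) = (z/2)^ν g(z)`, Bessel's equation becomes `z g'' + (2ν+1) g' + z g = 0`. For
`F = e^{cz} g`, using `(e^{cz})' = c e^{cz}` this turns into
`z F'' + (2ν+1) F' + z F = 2cz F' - c² z F + (2ν+1) c F`,
and comparing the coefficients of `z^n` gives
`(n+1)(2ν+n+1) f_{n+1} = c (2ν+2n+1) f_n - (c²+1) f_{n-1}`, which is the claimed recurrence for
`c = ±ip`. The computation is carried out on formal power series; as all the series involved are
entire, their coefficients are the Taylor coefficients of the corresponding functions. The sine case
follows from `sin(pz) = (e^{ipz} - e^{-ipz}) / (2i)`.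
-/

open Complex

/-- The entire part of the Bessel function of the first kind:
`J_ν(z) = (z/2)^ν * besselSeries ν z`. -/
noncomputable def besselSeries (ν : ℂ) (z : ℂ) : ℂ :=
  ∑' k : ℕ, (-1) ^ k * z ^ (2 * k) / (4 ^ k * (Nat.factorial k : ℂ) * Complex.Gamma (ν + (k : ℂ) + 1))

/-- The normalized `n`-th Maclaurin coefficient of `h(z) * J_ν(z)`:
`Γ(ν+1)` times the `n`-th Maclaurin coefficient of `z ↦ h z * besselSeries ν z`. -/
noncomputable def normCoeff (ν : ℂ) (h : ℂ → ℂ) (n : ℕ) : ℂ :=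
  Complex.Gamma (ν + 1) *
    (iteratedDeriv n (fun z => h z * besselSeries ν z) 0 / (Nat.factorial n : ℂ))

open PowerSeries FormalMultilinearSeries Filter Topology
open scoped Nat

section EntireSeries

variable {a : ℕ → ℂ} {f : ℂ → ℂ}

theorem ofScalars_radius_eq_top_of_summable (h : ∀ z : ℂ, Summable fun n => a n * z ^ n) :
    (ofScalars ℂ a).radius = ⊤ := by
  refine ENNReal.eq_top_of_forall_nnreal_le fun r =>
    (ofScalars ℂ a).le_radius_of_tendsto (l := 0) ?_
  simpa [ofScalars_norm] using (h r).tendsto_atTop_zero.norm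

theorem summable_norm_mul_pow_of_radius_eq_top (h : (ofScalars ℂ a).radius = ⊤) (z : ℂ) :
    Summable fun n => ‖a n * z ^ n‖ := by
  simpa [ofScalars_norm] using (ofScalars ℂ a).summable_norm_mul_pow (r := ‖z‖₊) (by simp [h])

theorem iteratedDeriv_div_factorial_eq_of_hasSum (h : ∀ z, HasSum (fun n => a n * z ^ n) (f z))
    (n : ℕ) : iteratedDeriv n f 0 / n ! = a n := by
  have hf : HasFPowerSeriesOnBall f (ofScalars ℂ a) 0 ⊤ :=
    { r_le := (ofScalars_radius_eq_top_of_summable fun z => (h z).summable).ge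
      r_pos := ENNReal.zero_lt_top
      hasSum := fun {y} _ => by simpa [ofScalars_apply_eq, mul_comm] using h y }
  have := hf.hasFPowerSeriesAt.eq_formalMultilinearSeries hf.analyticAt.hasFPowerSeriesAt
  exact (congrFun (ofScalars_series_injective ℂ ℂ this) n).symm

end EntireSeries

open Finset in
theorem hasSum_coeff_mul_mul_pow {P Q : ℂ⟦X⟧} {f g : ℂ → ℂ}
    (hP : ∀ z, HasSum (fun n => coeff n P * z ^ n) (f z))
    (hQ : ∀ z, HasSum (fun n => coeff n Q * z ^ n) (g z)) (z : ℂ) :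
    HasSum (fun n => coeff n (P * Q) * z ^ n) (f z * g z) := by
  have hnorm {R : ℂ⟦X⟧} {h : ℂ → ℂ} (hR : ∀ z, HasSum (fun n => coeff n R * z ^ n) (h z)) :=
    summable_norm_mul_pow_of_radius_eq_top
      (ofScalars_radius_eq_top_of_summable fun z => (hR z).summable) z
  have hcoeff : (fun n => coeff n (P * Q) * z ^ n) = fun n =>
      ∑ kl ∈ antidiagonal n, (coeff kl.1 P * z ^ kl.1) * (coeff kl.2 Q * z ^ kl.2) := by
    funext n
    rw [coeff_mul, Finset.sum_mul]
    refine Finset.sum_congr rfl fun kl hkl => ?_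
    rw [← HasAntidiagonal.mem_antidiagonal.mp hkl, pow_add]
    ring
  rw [← (hP z).tsum_eq, ← (hQ z).tsum_eq,
    tsum_mul_tsum_eq_tsum_sum_antidiagonal_of_summable_norm (hnorm hP) (hnorm hQ), hcoeff]
  exact (summable_norm_sum_mul_antidiagonal_of_summable_norm (hnorm hP) (hnorm hQ)).of_norm.hasSum

theorem hasSum_coeff_rescale_exp_mul_pow (c z : ℂ) :
    HasSum (fun n => coeff n (rescale c (PowerSeries.exp ℂ)) * z ^ n) (Complex.exp (c * z)) := by
  have hterm (n : ℕ) : coeff n (rescale c (PowerSeries.exp ℂ)) * z ^ n = (c * z) ^ n / n ! := by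
    simp [coeff_rescale, coeff_exp, mul_pow, div_eq_inv_mul]
    ring
  simp_rw [hterm, Complex.exp_eq_exp_ℂ]
  exact NormedSpace.expSeries_div_hasSum_exp (c * z)

theorem derivative_rescale_exp (c : ℂ) :
    d⁄dX ℂ (rescale c (PowerSeries.exp ℂ)) = C c * rescale c (PowerSeries.exp ℂ) := by
  ext n
  rw [coeff_derivative, coeff_C_mul, coeff_rescale, coeff_rescale, coeff_exp, coeff_exp]
  simp only [one_div, map_inv₀, map_natCast]
  rw [Nat.factorial_succ]
  push_cast
  field_simp
  ring

noncomputable def besselTerm (ν : ℂ) (k : ℕ) : ℂ :=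
  (-1) ^ k / (4 ^ k * k ! * Gamma (ν + k + 1))

-- Valid for every `ν`: at the poles of `Γ` both sides are `0`, by the convention `x / 0 = 0`.
theorem besselTerm_eq_mul_besselTerm_succ (ν : ℂ) (k : ℕ) :
    besselTerm ν k = -(4 * (k + 1) * (ν + k + 1)) * besselTerm ν (k + 1) := by
  have hΓ := one_div_Gamma_eq_self_mul_one_div_Gamma_add_one (ν + k + 1)
  simp only [besselTerm, div_eq_mul_inv, mul_inv, Nat.factorial_succ, pow_succ, Nat.cast_mul,
    Nat.cast_succ, add_assoc] at hΓ ⊢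
  rw [hΓ]
  field_simp

theorem eventually_besselTerm_ne_zero (ν : ℂ) : ∀ᶠ k in atTop, besselTerm ν k ≠ 0 := by
  filter_upwards [eventually_ge_atTop ⌈-ν.re⌉₊] with k hk
  have hre : 0 < (ν + k + 1).re := by
    have hk' := Nat.ceil_le.mp hk
    simp only [add_re, natCast_re, one_re]
    linarith
  simp [besselTerm, Gamma_ne_zero_of_re_pos hre, Nat.factorial_ne_zero]

theorem tendsto_norm_besselTerm_succ_div (ν : ℂ) :
    Tendsto (fun k => ‖besselTerm ν (k + 1)‖ / ‖besselTerm ν k‖) atTop (𝓝 0) := by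
  have hlow (k : ℕ) : (k : ℝ) + (1 - ‖ν‖) ≤ ‖4 * ((k : ℂ) + 1) * (ν + k + 1)‖ := by
    have hk : ‖(k : ℂ) + 1‖ = k + 1 := by exact_mod_cast Complex.norm_natCast (k + 1)
    have h1 : (k : ℝ) + 1 - ‖ν‖ ≤ ‖ν + k + 1‖ :=
      calc (k : ℝ) + 1 - ‖ν‖ = ‖(k : ℂ) + 1‖ - ‖-ν‖ := by rw [hk, norm_neg]
        _ ≤ ‖(k : ℂ) + 1 - -ν‖ := norm_sub_norm_le _ _
        _ = ‖ν + k + 1‖ := by ring_nf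
    have h2 : 1 ≤ ‖4 * ((k : ℂ) + 1)‖ := by
      rw [norm_mul, hk]
      norm_num
      linarith [k.cast_nonneg (α := ℝ)]
    rw [norm_mul]
    nlinarith [norm_nonneg (ν + k + 1)]
  have hdiv : Tendsto (fun k : ℕ => ‖4 * ((k : ℂ) + 1) * (ν + k + 1)‖⁻¹) atTop (𝓝 0) :=
    tendsto_inv_atTop_zero.comp <| tendsto_atTop_mono hlow <|
      tendsto_atTop_add_const_right _ _ tendsto_natCast_atTop_atTop
  refine hdiv.congr' ?_
  filter_upwards [eventually_besselTerm_ne_zero ν] with k hk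
  rw [besselTerm_eq_mul_besselTerm_succ ν k] at hk ⊢
  rw [norm_mul _ (besselTerm ν (k + 1)), norm_neg,
    div_mul_cancel_right₀ (norm_ne_zero_iff.mpr (right_ne_zero_of_mul hk))]

theorem ofScalars_besselTerm_radius_eq_top (ν : ℂ) : (ofScalars ℂ (besselTerm ν)).radius = ⊤ :=
  ofScalars_radius_eq_top_of_tendsto ℂ _ (eventually_besselTerm_ne_zero ν)
    (tendsto_norm_besselTerm_succ_div ν)

noncomputable def besselPowerSeries (ν : ℂ) : ℂ⟦X⟧ :=
  expand 2 two_ne_zero (mk (besselTerm ν))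

theorem coeff_besselPowerSeries_two_mul (ν : ℂ) (k : ℕ) :
    coeff (2 * k) (besselPowerSeries ν) = besselTerm ν k := by
  simp [besselPowerSeries]

theorem coeff_besselPowerSeries_two_mul_add_one (ν : ℂ) (k : ℕ) :
    coeff (2 * k + 1) (besselPowerSeries ν) = 0 :=
  coeff_expand_of_not_dvd 2 two_ne_zero _ (by omega)

theorem constantCoeff_besselPowerSeries (ν : ℂ) :
    constantCoeff (besselPowerSeries ν) = (Gamma (ν + 1))⁻¹ := by
  simp [besselPowerSeries, besselTerm]

theorem coeff_one_besselPowerSeries (ν : ℂ) : coeff 1 (besselPowerSeries ν) = 0 :=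
  coeff_besselPowerSeries_two_mul_add_one ν 0

theorem hasSum_coeff_besselPowerSeries_mul_pow (ν z : ℂ) :
    HasSum (fun n => coeff n (besselPowerSeries ν) * z ^ n) (besselSeries ν z) := by
  have hterm (k : ℕ) : besselTerm ν k * (z ^ 2) ^ k =
      (-1) ^ k * z ^ (2 * k) / (4 ^ k * (k ! : ℂ) * Gamma (ν + k + 1)) := by
    rw [besselTerm, ← pow_mul]
    ring
  have heven : HasSum (fun k => besselTerm ν k * (z ^ 2) ^ k) (besselSeries ν z) := by
    simp_rw [hterm, besselSeries]
    exact ((summable_norm_mul_pow_of_radius_eq_top (ofScalars_besselTerm_radius_eq_top ν)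
      (z ^ 2)).of_norm.congr hterm).hasSum
  rw [← add_zero (besselSeries ν z)]
  exact HasSum.even_add_odd
    (by simpa [coeff_besselPowerSeries_two_mul, pow_mul] using heven)
    (by simp only [coeff_besselPowerSeries_two_mul_add_one, zero_mul]; exact hasSum_zero)

noncomputable def besselOp (ν : ℂ) (P : ℂ⟦X⟧) : ℂ⟦X⟧ :=
  X * d⁄dX ℂ (d⁄dX ℂ P) + C (2 * ν + 1) * d⁄dX ℂ P + X * P

theorem coeff_zero_besselOp (ν : ℂ) (P : ℂ⟦X⟧) :
    coeff 0 (besselOp ν P) = (2 * ν + 1) * coeff 1 P := by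
  rw [besselOp, map_add, map_add, coeff_zero_X_mul, coeff_zero_X_mul, coeff_C_mul,
    coeff_derivative]
  ring

theorem coeff_succ_besselOp (ν : ℂ) (P : ℂ⟦X⟧) (n : ℕ) :
    coeff (n + 1) (besselOp ν P) = (n + 2) * (2 * ν + n + 2) * coeff (n + 2) P + coeff n P := by
  rw [besselOp, map_add, map_add, coeff_succ_X_mul, coeff_succ_X_mul, coeff_C_mul,
    coeff_derivative, coeff_derivative]
  push_cast
  ring

theorem besselOp_besselPowerSeries (ν : ℂ) : besselOp ν (besselPowerSeries ν) = 0 := by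
  ext m
  rcases m with _ | n
  · simp [coeff_zero_besselOp, coeff_one_besselPowerSeries]
  · rw [coeff_succ_besselOp, map_zero]
    obtain ⟨k, rfl | rfl⟩ := Nat.even_or_odd' n
    · rw [show 2 * k + 2 = 2 * (k + 1) by ring, coeff_besselPowerSeries_two_mul,
        coeff_besselPowerSeries_two_mul, besselTerm_eq_mul_besselTerm_succ ν k]
      push_cast
      ring
    · rw [show 2 * k + 1 + 2 = 2 * (k + 1) + 1 by ring, coeff_besselPowerSeries_two_mul_add_one,
        coeff_besselPowerSeries_two_mul_add_one]
      ring

theorem besselOp_mul_of_derivative_eq {E : ℂ⟦X⟧} {c : ℂ} (hE : d⁄dX ℂ E = C c * E) (ν : ℂ)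
    (B : ℂ⟦X⟧) :
    besselOp ν (E * B) = E * besselOp ν B + C (2 * c) * (X * d⁄dX ℂ (E * B))
      - C (c ^ 2) * (X * (E * B)) + C ((2 * ν + 1) * c) * (E * B) := by
  have hD (B : ℂ⟦X⟧) : d⁄dX ℂ (E * B) = C c * (E * B) + E * d⁄dX ℂ B := by
    rw [Derivation.leibniz, hE, smul_eq_mul, smul_eq_mul]
    ring
  have hD2 : d⁄dX ℂ (d⁄dX ℂ (E * B)) =
      C c * d⁄dX ℂ (E * B) + C c * (E * d⁄dX ℂ B) + E * d⁄dX ℂ (d⁄dX ℂ B) := by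
    rw [hD B, map_add, Derivation.leibniz, derivative_C, smul_zero, add_zero, smul_eq_mul, hD, hD]
    ring
  simp only [besselOp, hD2, map_mul, map_pow, map_add, map_one, map_ofNat]
  rw [hD]
  ring

noncomputable def expBesselSeries (ν c : ℂ) : ℂ⟦X⟧ :=
  rescale c (PowerSeries.exp ℂ) * besselPowerSeries ν

theorem coeff_expBesselSeries_succ_succ (ν c : ℂ) (n : ℕ) :
    (n + 2) * (2 * ν + n + 2) * coeff (n + 2) (expBesselSeries ν c)
      = c * (2 * ν + 2 * n + 3) * coeff (n + 1) (expBesselSeries ν c)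
        - (c ^ 2 + 1) * coeff n (expBesselSeries ν c) := by
  have h := congr(coeff (n + 1)
    $(besselOp_mul_of_derivative_eq (derivative_rescale_exp c) ν (besselPowerSeries ν)))
  rw [besselOp_besselPowerSeries, mul_zero, zero_add, coeff_succ_besselOp, ← expBesselSeries] at h
  simp only [map_add, map_sub, coeff_C_mul, coeff_succ_X_mul, coeff_derivative] at h
  linear_combination h

theorem coeff_zero_expBesselSeries (ν c : ℂ) :
    coeff 0 (expBesselSeries ν c) = (Gamma (ν + 1))⁻¹ := by
  rw [expBesselSeries, coeff_mul]
  simp [coeff_rescale, constantCoeff_besselPowerSeries]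

theorem coeff_one_expBesselSeries (ν c : ℂ) :
    coeff 1 (expBesselSeries ν c) = c * (Gamma (ν + 1))⁻¹ := by
  simp [expBesselSeries, coeff_mul, Finset.Nat.antidiagonal_succ, coeff_rescale, coeff_exp,
    constantCoeff_besselPowerSeries, coeff_one_besselPowerSeries]

theorem hasSum_coeff_expBesselSeries_mul_pow (ν c z : ℂ) :
    HasSum (fun n => coeff n (expBesselSeries ν c) * z ^ n)
      (Complex.exp (c * z) * besselSeries ν z) :=
  hasSum_coeff_mul_mul_pow (hasSum_coeff_rescale_exp_mul_pow c)
    (hasSum_coeff_besselPowerSeries_mul_pow ν) z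

theorem normCoeff_eq_of_hasSum {ν : ℂ} {h : ℂ → ℂ} {a : ℕ → ℂ}
    (ha : ∀ z, HasSum (fun n => a n * z ^ n) (h z * besselSeries ν z)) (n : ℕ) :
    normCoeff ν h n = Gamma (ν + 1) * a n := by
  rw [normCoeff, iteratedDeriv_div_factorial_eq_of_hasSum ha]

theorem normCoeff_exp_mul (ν c : ℂ) (n : ℕ) :
    normCoeff ν (fun z => Complex.exp (c * z)) n = Gamma (ν + 1) * coeff n (expBesselSeries ν c) :=
  normCoeff_eq_of_hasSum (hasSum_coeff_expBesselSeries_mul_pow ν c) n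

theorem sin_eq_exp_sub_exp_div (z : ℂ) :
    Complex.sin z = (Complex.exp (I * z) - Complex.exp (-I * z)) / (2 * I) := by
  rw [Complex.sin]
  field_simp
  ring_nf
  rw [I_sq]
  ring

theorem normCoeff_sin_mul (ν p : ℂ) (n : ℕ) :
    normCoeff ν (fun z => Complex.sin (p * z)) n =
      (normCoeff ν (fun z => Complex.exp (I * p * z)) n
        - normCoeff ν (fun z => Complex.exp (-(I * p) * z)) n) / (2 * I) := by
  rw [normCoeff_exp_mul, normCoeff_exp_mul, ← mul_sub, mul_div_assoc]
  refine normCoeff_eq_of_hasSum (a := fun n =>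
    (coeff n (expBesselSeries ν (I * p)) - coeff n (expBesselSeries ν (-(I * p)))) / (2 * I))
    (fun z => ?_) n
  have hsum := ((hasSum_coeff_expBesselSeries_mul_pow ν (I * p) z).sub
    (hasSum_coeff_expBesselSeries_mul_pow ν (-(I * p)) z)).div_const (2 * I)
  have hval : Complex.sin (p * z) * besselSeries ν z = (Complex.exp (I * p * z) * besselSeries ν z
      - Complex.exp (-(I * p) * z) * besselSeries ν z) / (2 * I) := by
    rw [sin_eq_exp_sub_exp_div, ← mul_assoc, ← mul_assoc, neg_mul]
    ring
  rw [hval]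
  exact hsum.congr_fun fun i => by ring

theorem normCoeff_exp_mul_zero {ν : ℂ} (hν : Gamma (ν + 1) ≠ 0) (c : ℂ) :
    normCoeff ν (fun z => Complex.exp (c * z)) 0 = 1 := by
  rw [normCoeff_exp_mul, coeff_zero_expBesselSeries, mul_inv_cancel₀ hν]

theorem normCoeff_exp_mul_one {ν : ℂ} (hν : Gamma (ν + 1) ≠ 0) (c : ℂ) :
    normCoeff ν (fun z => Complex.exp (c * z)) 1 = c := by
  rw [normCoeff_exp_mul, coeff_one_expBesselSeries, mul_left_comm, mul_inv_cancel₀ hν, mul_one]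

theorem normCoeff_exp_mul_succ {ν : ℂ} (c : ℂ) {n : ℕ} (hn : 1 ≤ n) (hν : 2 * ν + n + 1 ≠ 0) :
    normCoeff ν (fun z => Complex.exp (c * z)) (n + 1)
      = c * (2 * ν + 2 * n + 1) / ((n + 1) * (2 * ν + n + 1))
          * normCoeff ν (fun z => Complex.exp (c * z)) n
        + -(c ^ 2 + 1) / ((n + 1) * (2 * ν + n + 1))
          * normCoeff ν (fun z => Complex.exp (c * z)) (n - 1) := by
  obtain ⟨m, rfl⟩ := Nat.exists_eq_add_of_le' hn
  have hrec := coeff_expBesselSeries_succ_succ ν c m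
  simp only [normCoeff_exp_mul, Nat.add_sub_cancel]
  push_cast at hν ⊢
  have hm : (m : ℂ) + 1 + 1 ≠ 0 := by exact_mod_cast (m + 1).succ_ne_zero
  rw [div_mul_eq_mul_div, div_mul_eq_mul_div, ← add_div, eq_div_iff (mul_ne_zero hm hν)]
  linear_combination Gamma (ν + 1) * hrec

theorem sin_besselJ_coeff_recurrence (ν p : ℂ) (hν : ∀ n : ℕ, 2 * ν + (n : ℂ) + 1 ≠ 0)
    (u : ℕ → ℂ) (hu : ∀ n, u n = normCoeff ν (fun z => Complex.exp (Complex.I * p * z)) n)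
    (v : ℕ → ℂ) (hv : ∀ n, v n = normCoeff ν (fun z => Complex.exp (-(Complex.I * p) * z)) n)
    (w : ℕ → ℂ) (hw : ∀ n, w n = normCoeff ν (fun z => Complex.sin (p * z)) n) :
    (∀ n : ℕ, w n = (u n - v n) / (2 * Complex.I)) ∧ u 0 = 1 ∧ u 1 = Complex.I * p ∧ v 0 = 1 ∧ v 1 = -(Complex.I * p) ∧
    (∀ n : ℕ, 1 ≤ n →
      u (n + 1) = (Complex.I * p * (2 * ν + 2 * ((n : ℂ)) + 1) / ((((n : ℂ)) + 1) * (2 * ν + ((n : ℂ)) + 1))) * u n + ((p ^ 2 - 1) / ((((n : ℂ)) + 1) * (2 * ν + ((n : ℂ)) + 1))) * u (n - 1) ∧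
      v (n + 1) = (-(Complex.I * p * (2 * ν + 2 * ((n : ℂ)) + 1)) / ((((n : ℂ)) + 1) * (2 * ν + ((n : ℂ)) + 1))) * v n + ((p ^ 2 - 1) / ((((n : ℂ)) + 1) * (2 * ν + ((n : ℂ)) + 1))) * v (n - 1)) := by
  obtain rfl : u = _ := funext hu
  obtain rfl : v = _ := funext hv
  obtain rfl : w = _ := funext hw
  have hΓ : Gamma (ν + 1) ≠ 0 :=
    Gamma_ne_zero fun m h => hν (2 * m + 1) (by push_cast; linear_combination 2 * h)
  refine ⟨normCoeff_sin_mul ν p, normCoeff_exp_mul_zero hΓ _, normCoeff_exp_mul_one hΓ _,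
    normCoeff_exp_mul_zero hΓ _, normCoeff_exp_mul_one hΓ _, fun n hn => ⟨?_, ?_⟩⟩
  · rw [normCoeff_exp_mul_succ _ hn (hν n), mul_pow, I_sq]
    ring
  · rw [normCoeff_exp_mul_succ _ hn (hν n), neg_sq, mul_pow, I_sq]
    ring
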